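/- (Lemma 1, general multilayer case.) Let m ≥ 1 and p₀, …, p_m be positive integers, with p₀ = n. For each i ∈ {1,…,m}, let A_i be a real p_i × p_{i-1} matrix and b_i ∈ ℝ^{p_i}; let c ∈ ℝ^{p_m}. Define recursively x₀(x) = x, z_i(x) = A_i x_{i-1}(x) + b_i, x_i(x) = ReLU(z_i(x)) coordinatewise, and F(x) = ⟨c, x_m(x)⟩. Let ‖·‖ be a norm on ℝⁿ with dual norm ‖·‖_*, let Ω ⊆ ℝⁿ be convex, and let L ∈ ℝ be such that for every x ∈ Ω and every choice of vectors u_i ∈ ℝ^{p_i} with (u_i)ⱼ ∈ G((z_i(x))ⱼ) for all i ∈ {1,…,m} and all coordinates j, one has ‖A₁ᵀ diag(u₁) A₂ᵀ diag(u₂) ⋯ A_mᵀ diag(u_m) c‖_* ≤ L. Then for all x, y ∈ Ω, |F(y) - F(x)| ≤ L · ‖y - x‖. -/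

import Mathlib

/-! Along the segment `s ↦ x + s • (y - x)` every layer of the network is affine on a
right neighbourhood of each point: ReLU is affine on a one-sided neighbourhood of any argument `a`
with a slope `u ∈ G a`. Hence `F` has at each point of the segment a right derivative
`⟨c, diag(u_m) A_m ⋯ diag(u₁) A₁ (y - x)⟩ = ⟨A₁ᵀ diag(u₁) ⋯ A_mᵀ diag(u_m) c, y - x⟩` for a family
`u` admissible at that point, which the dual norm bounds by `L‖y - x‖`. The mean value inequality
for right derivatives then gives the Lipschitz bound. -/

open Matrix

/-- The ReLU function. -/
noncomputable def ReLU (x : ℝ) : ℝ := max 0 x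

/-- The generalized derivative of ReLU: `G(x) = {1}` for `x > 0`, `{0}` for `x < 0`,
and `{0, 1}` for `x = 0`. -/
noncomputable def G (x : ℝ) : Set ℝ :=
  if 0 < x then {1} else if x < 0 then {0} else {0, 1}

/-- The dual norm of a norm `N` on `ℝⁿ`:
`‖v‖_* = sup { |⟨t, v⟩| : N t ≤ 1 }`. -/
noncomputable def dualNorm (n : ℕ) (N : (Fin n → ℝ) → ℝ) (v : Fin n → ℝ) : ℝ :=
  sSup {r : ℝ | ∃ t : Fin n → ℝ, N t ≤ 1 ∧ r = |∑ i, t i * v i|}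

/-- The activation vectors of a multilayer ReLU network:
`x₀(x) = x` and `x_{i+1}(x) = ReLU(A_{i+1} x_i(x) + b_{i+1})` coordinatewise
(with the weight of layer `i+1` indexed here by `A i`). -/
noncomputable def layerOut (p : ℕ → ℕ)
    (A : ∀ i : ℕ, Matrix (Fin (p (i + 1))) (Fin (p i)) ℝ)
    (b : ∀ i : ℕ, Fin (p (i + 1)) → ℝ) (x : Fin (p 0) → ℝ) :
    (i : ℕ) → Fin (p i) → ℝ
  | 0 => x
  | i + 1 => fun j => ReLU (((A i).mulVec (layerOut p A b x i) + b i) j)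

/-- `pullback p A u i v = A₁ᵀ diag(u₁) ⋯ A_iᵀ diag(u_i) v` (with the weight of
layer `i+1` indexed here by `A i`, and similarly for `u`). -/
noncomputable def pullback (p : ℕ → ℕ)
    (A : ∀ i : ℕ, Matrix (Fin (p (i + 1))) (Fin (p i)) ℝ)
    (u : ∀ i : ℕ, Fin (p (i + 1)) → ℝ) :
    (i : ℕ) → (Fin (p i) → ℝ) → (Fin (p 0) → ℝ)
  | 0 => fun v => v
  | i + 1 => fun v => pullback p A u i (((A i)ᵀ * Matrix.diagonal (u i)).mulVec v)

open Filter Set Topology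

theorem Seminorm.exists_pos_mul_norm_le {E : Type*} [NormedAddCommGroup E] [NormedSpace ℝ E]
    [FiniteDimensional ℝ E] (q : Seminorm ℝ E) (hq : ∀ x, q x = 0 → x = 0) :
    ∃ ε > 0, ∀ x, ε * ‖x‖ ≤ q x := by
  have hpos : ∀ x ∈ Metric.sphere (0 : E) 1, 0 < q x := fun x hx =>
    (apply_nonneg q x).lt_of_ne' fun h => by simp [hq x h] at hx
  obtain ⟨ε, hε, hle⟩ := (isCompact_sphere (0 : E) 1).exists_forall_le'
    q.convexOn.locallyLipschitz.continuous.continuousOn hpos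
  refine ⟨ε, hε, fun x => ?_⟩
  rcases eq_or_ne x 0 with rfl | hx
  · simp
  have hx' : 0 < ‖x‖ := norm_pos_iff.2 hx
  have := hle (‖x‖⁻¹ • x) (by simp [norm_smul, hx'.ne'])
  rw [map_smul_eq_mul, norm_inv, norm_norm, le_inv_mul_iff₀ hx'] at this
  linarith

theorem abs_dotProduct_le_dualNorm_mul {n : ℕ} (q : Seminorm ℝ (Fin n → ℝ))
    (hq : ∀ t, q t = 0 → t = 0) (t v : Fin n → ℝ) :
    |t ⬝ᵥ v| ≤ dualNorm n q v * q t := by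
  obtain ⟨ε, hε, hle⟩ := q.exists_pos_mul_norm_le hq
  have hbdd : BddAbove {r : ℝ | ∃ t : Fin n → ℝ, q t ≤ 1 ∧ r = |∑ i, t i * v i|} := by
    refine ⟨ε⁻¹ * ∑ i, |v i|, ?_⟩
    rintro _ ⟨t, ht, rfl⟩
    have htε : ‖t‖ ≤ ε⁻¹ := by
      rw [← one_div, le_div_iff₀ hε]; linarith [hle t]
    calc |∑ i, t i * v i| ≤ ∑ i, |t i| * |v i| :=
          (Finset.abs_sum_le_sum_abs _ _).trans_eq (by simp only [abs_mul])
      _ ≤ ∑ i, ε⁻¹ * |v i| := by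
          gcongr with i
          exact (norm_le_pi_norm t i).trans htε
      _ = ε⁻¹ * ∑ i, |v i| := (Finset.mul_sum ..).symm
  have hunit : ∀ t, q t ≤ 1 → |t ⬝ᵥ v| ≤ dualNorm n q v := fun t ht =>
    le_csSup hbdd ⟨t, ht, rfl⟩
  rcases (apply_nonneg q t).eq_or_lt with h | h
  · simp [hq t h.symm]
  have := hunit ((q t)⁻¹ • t) (by
    rw [map_smul_eq_mul, norm_inv, Real.norm_of_nonneg h.le, inv_mul_cancel₀ h.ne'])
  rw [smul_dotProduct, smul_eq_mul, abs_mul, abs_inv, abs_of_pos h, inv_mul_le_iff₀ h] at this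
  linarith

lemma continuous_ReLU : Continuous ReLU := continuous_const.max continuous_id

theorem exists_mem_G_eventually_ReLU_add_mul (a β : ℝ) :
    ∃ u ∈ G a, ∀ᶠ s in 𝓝[≥] (0 : ℝ), ReLU (a + s * β) = ReLU a + s * (u * β) := by
  have hlim : Tendsto (fun s : ℝ => a + s * β) (𝓝[≥] 0) (𝓝 a) := by
    have : Continuous fun s : ℝ => a + s * β := by fun_prop
    simpa using (this.tendsto 0).mono_left nhdsWithin_le_nhds
  rcases lt_trichotomy a 0 with ha | rfl | ha
  · refine ⟨0, by simp [G, ha, ha.not_gt], ?_⟩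
    filter_upwards [hlim.eventually (eventually_lt_nhds ha)] with s hs
    simp [ReLU, hs.le, ha.le]
  · by_cases hβ : 0 < β
    · refine ⟨1, by simp [G], eventually_nhdsWithin_of_forall fun s hs => ?_⟩
      simp [ReLU, mul_nonneg (mem_Ici.1 hs) hβ.le]
    · refine ⟨0, by simp [G], eventually_nhdsWithin_of_forall fun s hs => ?_⟩
      simp [ReLU, mul_nonpos_of_nonneg_of_nonpos (mem_Ici.1 hs) (not_lt.1 hβ)]
  · refine ⟨1, by simp [G, ha], ?_⟩
    filter_upwards [hlim.eventually (eventually_gt_nhds ha)] with s hs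
    simp [ReLU, hs.le, ha.le]

section Network

variable (p : ℕ → ℕ) (A : ∀ i : ℕ, Matrix (Fin (p (i + 1))) (Fin (p i)) ℝ)

/-- `pushforward p A u i d = diag(u_i) A_i ⋯ diag(u₁) A₁ d`, the transpose of `pullback`. -/
noncomputable def pushforward (u : ∀ i : ℕ, Fin (p (i + 1)) → ℝ) :
    (i : ℕ) → (Fin (p 0) → ℝ) → Fin (p i) → ℝ
  | 0 => fun d => d
  | i + 1 => fun d => (diagonal (u i) * A i) *ᵥ pushforward u i d

theorem pushforward_congr {u u' : ∀ i : ℕ, Fin (p (i + 1)) → ℝ} {i : ℕ}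
    (h : ∀ k < i, u k = u' k) : pushforward p A u i = pushforward p A u' i := by
  induction i with
  | zero => rfl
  | succ i ih =>
    funext d
    simp only [pushforward, h i i.lt_succ_self, ih fun k hk => h k (hk.trans i.lt_succ_self)]

theorem pullback_dotProduct (u : ∀ i : ℕ, Fin (p (i + 1)) → ℝ) (i : ℕ)
    (v : Fin (p i) → ℝ) (d : Fin (p 0) → ℝ) :
    pullback p A u i v ⬝ᵥ d = v ⬝ᵥ pushforward p A u i d := by
  induction i with
  | zero => rfl
  | succ i ih =>
    rw [pullback, pushforward, ih, dotProduct_mulVec, ← mulVec_transpose, transpose_mul,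
      diagonal_transpose]

variable (b : ∀ i : ℕ, Fin (p (i + 1)) → ℝ)

theorem continuous_layerOut (i : ℕ) : Continuous fun x => layerOut p A b x i := by
  induction i with
  | zero => exact continuous_id
  | succ i ih =>
    exact continuous_pi fun j => continuous_ReLU.comp
      ((continuous_apply j).comp ((continuous_const.matrix_mulVec ih).add continuous_const))

theorem exists_admissible_eventually_layerOut_add_smul (x d : Fin (p 0) → ℝ) (i : ℕ) :
    ∃ u : ∀ k : ℕ, Fin (p (k + 1)) → ℝ,
      (∀ k < i, ∀ j, u k j ∈ G ((A k *ᵥ layerOut p A b x k + b k) j)) ∧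
      ∀ᶠ s in 𝓝[≥] (0 : ℝ),
        layerOut p A b (x + s • d) i = layerOut p A b x i + s • pushforward p A u i d := by
  induction i with
  | zero => exact ⟨0, fun k hk => absurd hk k.not_lt_zero, Eventually.of_forall fun s => rfl⟩
  | succ i ih =>
    obtain ⟨u, hu, hev⟩ := ih
    set w := pushforward p A u i d
    choose uᵢ huᵢ hevᵢ using fun j =>
      exists_mem_G_eventually_ReLU_add_mul ((A i *ᵥ layerOut p A b x i + b i) j) ((A i *ᵥ w) j)
    have hu' : ∀ k < i, Function.update u i uᵢ k = u k := fun k hk =>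
      Function.update_of_ne hk.ne _ _
    refine ⟨Function.update u i uᵢ, fun k hk j => ?_, ?_⟩
    · rcases Nat.lt_succ_iff_lt_or_eq.1 hk with hk | rfl
      · rw [hu' k hk]
        exact hu k hk j
      · rw [Function.update_self]
        exact huᵢ j
    · filter_upwards [hev, eventually_all.2 hevᵢ] with s hs hsᵢ
      funext j
      have hz : (A i *ᵥ layerOut p A b (x + s • d) i + b i) j
          = (A i *ᵥ layerOut p A b x i + b i) j + s * (A i *ᵥ w) j := by
        rw [hs, mulVec_add, mulVec_smul]
        simp only [Pi.add_apply, Pi.smul_apply, smul_eq_mul]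
        ring
      have hw : pushforward p A (Function.update u i uᵢ) (i + 1) d j = uᵢ j * (A i *ᵥ w) j := by
        simp only [pushforward, Function.update_self, pushforward_congr p A hu', ← mulVec_mulVec,
          mulVec_diagonal, w]
      change ReLU _ = ReLU _ + s * _
      rw [hz, hsᵢ j, hw]

end Network

theorem hasDerivWithinAt_Ici_of_eventually_eq_add_smul {E : Type*} [NormedAddCommGroup E]
    [NormedSpace ℝ E] {f : ℝ → E} {t : ℝ} {w : E}
    (h : ∀ᶠ s in 𝓝[≥] (0 : ℝ), f (t + s) = f t + s • w) : HasDerivWithinAt f w (Ici t) t := by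
  have hshift : Tendsto (fun s => s - t) (𝓝[≥] t) (𝓝[≥] 0) := tendsto_nhdsWithin_iff.2
    ⟨by simpa using ((continuous_sub_right t).tendsto t).mono_left nhdsWithin_le_nhds,
      eventually_mem_nhdsWithin.mono fun s hs => mem_Ici.2 (sub_nonneg.2 hs)⟩
  have hf : f =ᶠ[𝓝[≥] t] fun s => f t + (s - t) • w :=
    (hshift.eventually h).mono fun s hs => by simpa using hs
  have haff : HasDerivAt (fun s => f t + (s - t) • w) w t := by
    simpa using (((hasDerivAt_id t).sub_const t).smul_const w).const_add (f t)
  exact haff.hasDerivWithinAt.congr_of_eventuallyEq hf (by simp)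

theorem multilayer_lipschitz_bound_general (m : ℕ)
    (p : ℕ → ℕ)
    (A : ∀ i : ℕ, Matrix (Fin (p (i + 1))) (Fin (p i)) ℝ)
    (b : ∀ i : ℕ, Fin (p (i + 1)) → ℝ)
    (c : Fin (p m) → ℝ)
    (N : (Fin (p 0) → ℝ) → ℝ)
    (Nadd : ∀ a b : Fin (p 0) → ℝ, N (a + b) ≤ N a + N b)
    (Nsmul : ∀ (r : ℝ) (a : Fin (p 0) → ℝ), N (r • a) = |r| * N a)
    (Ndef : ∀ a : Fin (p 0) → ℝ, N a = 0 → a = 0)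
    (F : (Fin (p 0) → ℝ) → ℝ)
    (hF : ∀ x, F x = ∑ j, c j * layerOut p A b x m j)
    (Ω : Set (Fin (p 0) → ℝ)) (hΩ : Convex ℝ Ω) (L : ℝ)
    (hL : ∀ x ∈ Ω, ∀ u : ∀ i : ℕ, Fin (p (i + 1)) → ℝ,
      (∀ i < m, ∀ j, u i j ∈ G (((A i).mulVec (layerOut p A b x i) + b i) j)) →
      dualNorm (p 0) N (pullback p A u m c) ≤ L) :
    ∀ x ∈ Ω, ∀ y ∈ Ω, |F y - F x| ≤ L * N (y - x) := by
  intro x hx y hy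
  let q : Seminorm ℝ (Fin (p 0) → ℝ) := .of N Nadd fun r a => by rw [Nsmul, Real.norm_eq_abs]
  have hF' : F = fun x => c ⬝ᵥ layerOut p A b x m := funext hF
  set d := y - x
  let g : ℝ → ℝ := fun s => F (x + s • d)
  have hg : ∀ t ∈ Ico (0 : ℝ) 1, ∃ g', HasDerivWithinAt g g' (Ici t) t ∧ ‖g'‖ ≤ L * N d := by
    intro t ht
    obtain ⟨u, hu, hev⟩ := exists_admissible_eventually_layerOut_add_smul p A b (x + t • d) d m
    refine ⟨c ⬝ᵥ pushforward p A u m d, hasDerivWithinAt_Ici_of_eventually_eq_add_smul ?_, ?_⟩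
    · filter_upwards [hev] with s hs
      simp only [g, hF', add_smul, ← add_assoc, hs, dotProduct_add, dotProduct_smul, smul_eq_mul]
    · rw [Real.norm_eq_abs, ← pullback_dotProduct, dotProduct_comm]
      calc |d ⬝ᵥ pullback p A u m c| ≤ dualNorm (p 0) q (pullback p A u m c) * q d :=
            abs_dotProduct_le_dualNorm_mul q Ndef _ _
        _ ≤ L * N d := mul_le_mul_of_nonneg_right
            (hL _ (hΩ.add_smul_sub_mem hx hy ⟨ht.1, ht.2.le⟩) u hu) (apply_nonneg q d)
  choose! g' hg' hbound using hg
  have hcont : Continuous g := by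
    simp only [g, hF']
    exact continuous_const.dotProduct ((continuous_layerOut p A b m).comp (by fun_prop))
  simpa [g, d] using norm_image_sub_le_of_norm_deriv_right_le_segment hcont.continuousOn hg'
    hbound 1 ⟨zero_le_one, le_rfl⟩

/-- Lemma 1, general multilayer case: for an `m`-hidden-layer ReLU network
`F(x) = ⟨c, x_m(x)⟩`, if `‖A₁ᵀ diag(u₁) ⋯ A_mᵀ diag(u_m) c‖_* ≤ L` for every
`x ∈ Ω` and every admissible family `u` with `(u_i)ⱼ ∈ G((z_i(x))ⱼ)`, then `L`
is a Lipschitz constant for `F` on the convex set `Ω` w.r.t. the norm `N`. -/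
theorem multilayer_lipschitz_bound (m : ℕ) (hm : 1 ≤ m)
    (p : ℕ → ℕ) (hp : ∀ i ≤ m, 0 < p i)
    (A : ∀ i : ℕ, Matrix (Fin (p (i + 1))) (Fin (p i)) ℝ)
    (b : ∀ i : ℕ, Fin (p (i + 1)) → ℝ)
    (c : Fin (p m) → ℝ)
    (N : (Fin (p 0) → ℝ) → ℝ)
    (Nadd : ∀ a b : Fin (p 0) → ℝ, N (a + b) ≤ N a + N b)
    (Nsmul : ∀ (r : ℝ) (a : Fin (p 0) → ℝ), N (r • a) = |r| * N a)
    (Ndef : ∀ a : Fin (p 0) → ℝ, N a = 0 → a = 0)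
    (F : (Fin (p 0) → ℝ) → ℝ)
    (hF : ∀ x, F x = ∑ j, c j * layerOut p A b x m j)
    (Ω : Set (Fin (p 0) → ℝ)) (hΩ : Convex ℝ Ω) (L : ℝ)
    (hL : ∀ x ∈ Ω, ∀ u : ∀ i : ℕ, Fin (p (i + 1)) → ℝ,
      (∀ i < m, ∀ j, u i j ∈ G (((A i).mulVec (layerOut p A b x i) + b i) j)) →
      dualNorm (p 0) N (pullback p A u m c) ≤ L) :
    ∀ x ∈ Ω, ∀ y ∈ Ω, |F y - F x| ≤ L * N (y - x) :=
  multilayer_lipschitz_bound_general m p A b c N Nadd Nsmul Ndef F hF Ω hΩ L hL
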